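/- arXiv:1710.06889 — 3 statements merged into one kernel-verified Lean document; each statement's English description precedes it below -/
import Mathlib

section
/- Let 𝓡 = {f₀} ∪ {f_{m,r} : m ≥ 1, r ∈ G_m} be the rotational uniform covering frame on ℝ² with parameters (A, B). Then the frame condition holds: for every ξ ∈ ℝ², |𝓕f₀(ξ)|² + ∑_{m=1}^∞ ∑_{r∈G_m} |𝓕f_{m,r}(ξ)|² = 1. -/
open MeasureTheory Complex Real

noncomputable section

/-- `m*`: the unique power of two with `m ≤ m* < 2m`. -/
def mstar (m : ℕ) : ℕ := 2 ^ Nat.clog 2 m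

/-- The rotation of `ℝ² = ℂ` by the angle `2πj/n`, as a unit complex number. -/
def rotC (n : ℕ) (j : ℕ) : ℂ := Complex.exp (2 * Real.pi * Complex.I * j / n)

/-- The finite rotation group `G_m` (the rotations of `ℝ² = ℂ` by integer multiples of the
angle `2π/(m* B)`), realized as a finset of unit complex numbers.  `G = Gm B 1` consists of
the rotations by integer multiples of `2π/B`. -/
def Gm (B m : ℕ) : Finset ℂ := (Finset.range (mstar m * B)).image (rotC (mstar m * B))

/-- The real dot product on `ℝ² = ℂ`. -/
def dotR (x ξ : ℂ) : ℝ := (x * (starRingEnd ℂ) ξ).re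

/-- The Fourier transform on `ℝ² = ℂ`. -/
def FT (f : ℂ → ℂ) (ξ : ℂ) : ℂ :=
  ∫ x : ℂ, Complex.exp (-(2 * Real.pi * Complex.I) * (dotR x ξ)) * f x

/-- Convolution on `ℝ² = ℂ`. -/
def conv (u v : ℂ → ℂ) (x : ℂ) : ℂ := ∫ y : ℂ, u (x - y) * v y

/-- A rotational uniform covering frame on `ℝ² = ℂ` with parameters `A`, `B`:
the data of the window `η`, the angular windows `β m`, and the Schwartz frame elements
`f0` and `f m r` (the latter indexed by `m ≥ 1` and `r ∈ G_m`), subject to the defining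
properties. -/
structure RotUCF (A : ℝ) (B : ℕ) where
  hA : 0 < A
  hB : 1 ≤ B
  η : ℝ → ℝ
  β : ℕ → ℝ → ℝ
  f0 : SchwartzMap ℂ ℂ
  f : ℕ → ℂ → SchwartzMap ℂ ℂ
  η_nonneg : ∀ x : ℝ, 0 ≤ η x
  η_even : ∀ x : ℝ, η (-x) = η x
  η_smooth : ContDiff ℝ (⊤ : ℕ∞) η
  η_supp : ∀ x : ℝ, A < |x| → η x = 0
  η_partition : ∀ x : ℝ, ∑' k : ℤ, (η (x - A * k)) ^ 2 = 1
  β_nonneg : ∀ m, ∀ x : ℝ, 0 ≤ β m x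
  β_smooth : ∀ m, 1 ≤ m → ContDiff ℝ (⊤ : ℕ∞) (β m)
  β_periodic : ∀ m, 1 ≤ m → Function.Periodic (β m) (2 * Real.pi)
  β_supp : ∀ m, 1 ≤ m → ∀ x : ℝ,
    (∀ k : ℤ, 2 * Real.pi / (mstar m * B) < |x - 2 * Real.pi * k|) → β m x = 0
  β_partition : ∀ m, 1 ≤ m → ∀ x : ℝ,
    ∑ j ∈ Finset.range (mstar m * B), (β m (x - 2 * Real.pi * j / (mstar m * B))) ^ 2 = 1
  FT_f0 : ∀ ξ : ℂ, FT f0 ξ = ((η ‖ξ‖ : ℝ) : ℂ)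
  FT_f : ∀ m, 1 ≤ m → ∀ r ∈ Gm B m, ∀ ξ : ℂ, ξ ≠ 0 →
    FT (f m r) ξ = ((η (‖ξ‖ - m * A) * β m ((r⁻¹ * ξ).arg) : ℝ) : ℂ)
  FT_f_zero : ∀ m, 1 ≤ m → ∀ r ∈ Gm B m, FT (f m r) 0 = 0

variable {A : ℝ} {B : ℕ}

/-- Membership in the index set `𝒢 = {(m, r) : m ≥ 1, r ∈ G_m}`. -/
def validIdx (B : ℕ) (a : ℕ × ℂ) : Prop := 1 ≤ a.1 ∧ a.2 ∈ Gm B a.1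

/-- Membership in the transversal `𝒢₀ = {(m, ρ_{m,j}) : m ≥ 1, 0 ≤ j < m*}` of the
cosets of `G` in `𝒢`. -/
def transIdx (B : ℕ) (a : ℕ × ℂ) : Prop :=
  1 ≤ a.1 ∧ ∃ j < mstar a.1, a.2 = rotC (mstar a.1 * B) j

/-- A list all of whose entries lie in `𝒢`. -/
def ValidList (B : ℕ) (p : List (ℕ × ℂ)) : Prop := ∀ a ∈ p, validIdx B a

/-- The set `𝒢^k` of `k`-tuples of indices, as a type. -/
def Gk (B k : ℕ) : Type := {p : List (ℕ × ℂ) // p.length = k ∧ ValidList B p}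

/-- The set `𝒬_k = 𝒢₀ × 𝒢^{k-1} ⊆ 𝒢^k`, as a type. -/
def Qk (B k : ℕ) : Type :=
  {p : List (ℕ × ℂ) // p.length = k ∧ ValidList B p ∧ transIdx B p.headI}

/-- The set `𝒬[M,k]` of those `q ∈ 𝒬_k` all of whose indices `(m,r)` satisfy `m ≤ M`. -/
def QkM (B M k : ℕ) : Type :=
  {p : List (ℕ × ℂ) // p.length = k ∧ ValidList B p ∧ transIdx B p.headI ∧ ∀ a ∈ p, a.1 ≤ M}

/-- The left action `rp = (rp₁, …, rp_k)` of `r ∈ G` on a tuple of indices,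
where `r(m, s) = (m, rs)`. -/
def actL (r : ℂ) (p : List (ℕ × ℂ)) : List (ℕ × ℂ) := p.map fun a => (a.1, r * a.2)

/-- The rotation `g_r(x) = g(rx)` of a function by `r`. -/
def rotF (r : ℂ) (g : ℂ → ℂ) : ℂ → ℂ := fun x => g (r * x)

/-- The scattering propagator `U[p]f = |⋯||f ⋆ f_{p₁}| ⋆ f_{p₂}|⋯ ⋆ f_{p_k}|`. -/
def U (𝓡 : RotUCF A B) : List (ℕ × ℂ) → (ℂ → ℂ) → (ℂ → ℂ)
  | [], g => g
  | a :: p, g => U 𝓡 p fun x => ((‖conv g (⇑(𝓡.f a.1 a.2)) x‖ : ℝ) : ℂ)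

/-- The zeroth feature map `Φ₀f(x) = B^{-1/2} (∑_{s ∈ G} |(f ⋆ f₀)(sx)|²)^{1/2}`. -/
def Phi0 (𝓡 : RotUCF A B) (g : ℂ → ℂ) : ℂ → ℝ :=
  fun x => (B : ℝ) ^ (-(1 : ℝ) / 2) * Real.sqrt (∑ s ∈ Gm B 1, ‖conv g (⇑𝓡.f0) (s * x)‖ ^ 2)

/-- The feature map `Φ_q f(x) = (∑_{s ∈ G} |(U[sq]f ⋆ f₀)(sx)|²)^{1/2}` for `q ∈ 𝒬_k`. -/
def PhiQ (𝓡 : RotUCF A B) (q : List (ℕ × ℂ)) (g : ℂ → ℂ) : ℂ → ℝ :=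
  fun x => Real.sqrt (∑ s ∈ Gm B 1, ‖conv (U 𝓡 (actL s q) g) (⇑𝓡.f0) (s * x)‖ ^ 2)

end

noncomputable section
variable {A : ℝ} {B : ℕ}

lemma mstar_pos (m : ℕ) : 0 < mstar m := Nat.pow_pos (by norm_num)

lemma mstarB_pos (hB : 1 ≤ B) (m : ℕ) : 0 < mstar m * B :=
  Nat.mul_pos (mstar_pos m) hB

/-- `rotC n` is injective on `range n`. -/
lemma rotC_injOn {n : ℕ} (hn : 0 < n) :
    ∀ j ∈ Finset.range n, ∀ j' ∈ Finset.range n, rotC n j = rotC n j' → j = j' := by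
  intro j hj j' hj' h
  rw [Finset.mem_range] at hj hj'
  unfold rotC at h
  rw [Complex.exp_eq_exp_iff_exists_int] at h
  obtain ⟨k, hk⟩ := h
  have hn' : (n : ℂ) ≠ 0 := Nat.cast_ne_zero.mpr hn.ne'
  have h2 : (2 * (π : ℂ) * Complex.I) ≠ 0 := by
    simp [Real.pi_ne_zero, Complex.I_ne_zero]
  have hz : (2 * (π : ℂ) * Complex.I) * ((j : ℂ) - j' - k * n) = 0 := by
    field_simp at hk
    linear_combination (2 * (π : ℂ) * Complex.I) * hk
  have hz' : (j : ℂ) - j' - k * n = 0 := by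
    rcases mul_eq_zero.mp hz with h | h
    · exact absurd h h2
    · exact h
  have hzz : (j : ℤ) - j' - k * n = 0 := by exact_mod_cast hz'
  have hjz : (j : ℤ) < n := by exact_mod_cast hj
  have hjz' : (j' : ℤ) < n := by exact_mod_cast hj'
  have hj0 : (0 : ℤ) ≤ (j : ℤ) := Int.natCast_nonneg j
  have hj0' : (0 : ℤ) ≤ (j' : ℤ) := Int.natCast_nonneg j'
  have hk0 : k = 0 := by
    by_contra hk0
    rcases lt_or_gt_of_ne hk0 with h | h
    · have h1 : k ≤ -1 := by omega
      have hnz : (1 : ℤ) ≤ n := by exact_mod_cast hn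
      nlinarith
    · have h1 : 1 ≤ k := by omega
      have hnz : (1 : ℤ) ≤ n := by exact_mod_cast hn
      nlinarith
  rw [hk0, zero_mul] at hzz
  have : (j : ℤ) = j' := by omega
  exact_mod_cast this

/-- Rotating `ξ` by `(rotC n j)⁻¹` shifts the argument by `-2πj/n`, modulo `2π`. -/
lemma periodic_arg_rot (f : ℝ → ℝ) (hf : Function.Periodic f (2 * π)) {n : ℕ} (j : ℕ)
    (hn : 0 < n) (ξ : ℂ) (hξ : ξ ≠ 0) :
    f (((rotC n j)⁻¹ * ξ).arg) = f (ξ.arg - 2 * π * j / n) := by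
  set θ : ℝ := 2 * π * j / n with hθ
  have hn' : (n : ℝ) ≠ 0 := Nat.cast_ne_zero.mpr hn.ne'
  have hrot : rotC n j = Complex.exp ((θ : ℂ) * Complex.I) := by
    unfold rotC
    congr 1
    push_cast [hθ]
    field_simp
  have hinv : (rotC n j)⁻¹ = Complex.exp ((-θ : ℝ) * Complex.I) := by
    rw [hrot, ← Complex.exp_neg]
    congr 1
    push_cast
    ring
  set w : ℂ := (rotC n j)⁻¹ * ξ with hw
  have hwne : w ≠ 0 := by
    rw [hw, hinv]
    exact mul_ne_zero (Complex.exp_ne_zero _) hξ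
  have habsw : ‖w‖ = ‖ξ‖ := by
    rw [hw, hinv, norm_mul, Complex.norm_exp_ofReal_mul_I, one_mul]
  have hexp : Complex.exp ((w.arg : ℂ) * Complex.I)
      = Complex.exp (((ξ.arg - θ : ℝ) : ℂ) * Complex.I) := by
    have h1 : (‖w‖ : ℂ) * Complex.exp ((w.arg : ℂ) * Complex.I) = w :=
      Complex.norm_mul_exp_arg_mul_I w
    have h2 : (‖ξ‖ : ℂ) * Complex.exp ((ξ.arg : ℂ) * Complex.I) = ξ :=
      Complex.norm_mul_exp_arg_mul_I ξ
    have habs : (‖ξ‖ : ℂ) ≠ 0 :=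
      Complex.ofReal_ne_zero.mpr (norm_ne_zero_iff.mpr hξ)
    apply mul_left_cancel₀ habs
    calc (‖ξ‖ : ℂ) * Complex.exp ((w.arg : ℂ) * Complex.I)
        = (‖w‖ : ℂ) * Complex.exp ((w.arg : ℂ) * Complex.I) := by rw [habsw]
      _ = w := h1
      _ = Complex.exp ((-θ : ℝ) * Complex.I) * ξ := by rw [hw, hinv]
      _ = Complex.exp ((-θ : ℝ) * Complex.I) *
            ((‖ξ‖ : ℂ) * Complex.exp ((ξ.arg : ℂ) * Complex.I)) := by rw [h2]
      _ = (‖ξ‖ : ℂ) * Complex.exp (((ξ.arg - θ : ℝ) : ℂ) * Complex.I) := by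
          rw [mul_left_comm, ← Complex.exp_add]
          congr 2
          push_cast
          ring
  rw [Complex.exp_eq_exp_iff_exists_int] at hexp
  obtain ⟨k, hk⟩ := hexp
  have him : w.arg = ξ.arg - θ + k * (2 * π) := by
    have := congrArg Complex.im hk
    simpa using this
  rw [him]
  exact (hf.int_mul k) (ξ.arg - θ)

/-- `η` vanishes outside the open interval `(-A, A)`. -/
lemma eta_zero_of_ge (𝓡 : RotUCF A B) {x : ℝ} (hx : A ≤ |x|) : 𝓡.η x = 0 := by
  rcases lt_or_eq_of_le hx with h | h
  · exact 𝓡.η_supp x h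
  · have hA : 𝓡.η A = 0 := by
      have hcont : Continuous 𝓡.η := 𝓡.η_smooth.continuous
      have h0 : Set.EqOn 𝓡.η (fun _ => (0 : ℝ)) (Set.Ioi A) := by
        intro y hy
        exact 𝓡.η_supp y (by rw [abs_of_pos (lt_trans 𝓡.hA hy)]; exact hy)
      have := h0.closure hcont continuous_const
      have hmem : A ∈ closure (Set.Ioi A) := by rw [closure_Ioi]; exact Set.self_mem_Ici
      exact this hmem
    rcases abs_eq (le_of_lt 𝓡.hA) |>.mp h.symm with h' | h'
    · rw [h']; exact hA
    · rw [h', 𝓡.η_even]; exact hA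

/-- frame condition: for every `ξ ∈ ℝ²`,
`|𝓕f₀(ξ)|² + ∑_{m ≥ 1} ∑_{r ∈ G_m} |𝓕f_{m,r}(ξ)|² = 1`. -/
theorem frame_condition (𝓡 : RotUCF A B) (ξ : ℂ) :
    ‖FT (⇑𝓡.f0) ξ‖ ^ 2 + ∑' m : ℕ, ∑ r ∈ Gm B (m + 1), ‖FT (⇑(𝓡.f (m + 1) r)) ξ‖ ^ 2 = 1 := by
  have hnormsq : ∀ r : ℝ, ‖((r : ℝ) : ℂ)‖ ^ 2 = r ^ 2 := by
    intro r
    rw [Complex.norm_real, Real.norm_eq_abs]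
    exact sq_abs r
  by_cases hξ : ξ = 0
  · subst hξ
    have hterm : ∀ m : ℕ, ∑ r ∈ Gm B (m + 1), ‖FT (⇑(𝓡.f (m + 1) r)) 0‖ ^ 2 = 0 := by
      intro m
      apply Finset.sum_eq_zero
      intro r hr
      rw [𝓡.FT_f_zero (m + 1) (Nat.le_add_left 1 m) r hr]
      simp
    rw [tsum_congr hterm, tsum_zero, add_zero, 𝓡.FT_f0 0, hnormsq]
    have hpart := 𝓡.η_partition 0
    rw [tsum_eq_single (0 : ℤ) ?_] at hpart
    · simpa using hpart
    · intro k hk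
      have h1 : (1 : ℤ) ≤ |k| := Int.one_le_abs hk
      have h1' : (1 : ℝ) ≤ |(k : ℝ)| := by
        rw [← Int.cast_abs]; exact_mod_cast h1
      have hz : 𝓡.η (0 - A * k) = 0 := by
        apply eta_zero_of_ge 𝓡
        rw [zero_sub, abs_neg, abs_mul, abs_of_pos 𝓡.hA]
        exact le_mul_of_one_le_right 𝓡.hA.le h1'
      rw [hz]; ring
  · have hx : 0 < ‖ξ‖ := norm_pos_iff.mpr hξ
    have hsum : ∀ m : ℕ, ∑ r ∈ Gm B (m + 1), ‖FT (⇑(𝓡.f (m + 1) r)) ξ‖ ^ 2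
        = 𝓡.η (‖ξ‖ - (m + 1 : ℕ) * A) ^ 2 := by
      intro m
      have h1m : 1 ≤ m + 1 := Nat.le_add_left 1 m
      have hnpos : 0 < mstar (m + 1) * B := mstarB_pos 𝓡.hB _
      rw [Gm, Finset.sum_image (rotC_injOn hnpos)]
      have hterm : ∀ j ∈ Finset.range (mstar (m + 1) * B),
          ‖FT (⇑(𝓡.f (m + 1) (rotC (mstar (m + 1) * B) j))) ξ‖ ^ 2
          = 𝓡.η (‖ξ‖ - (m + 1 : ℕ) * A) ^ 2
            * 𝓡.β (m + 1) (ξ.arg - 2 * π * j / (mstar (m + 1) * B)) ^ 2 := by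
        intro j hj
        have hmem : rotC (mstar (m + 1) * B) j ∈ Gm B (m + 1) :=
          Finset.mem_image_of_mem _ hj
        rw [𝓡.FT_f (m + 1) h1m _ hmem ξ hξ, hnormsq, mul_pow]
        rw [periodic_arg_rot (𝓡.β (m + 1)) (𝓡.β_periodic (m + 1) h1m) j hnpos ξ hξ]
        norm_cast
      rw [Finset.sum_congr rfl hterm, ← Finset.mul_sum,
        𝓡.β_partition (m + 1) h1m ξ.arg, mul_one]
    rw [𝓡.FT_f0 ξ, hnormsq, tsum_congr hsum]
    -- radial partition of unity
    set F : ℤ → ℝ := fun k => 𝓡.η (‖ξ‖ - A * k) ^ 2 with hF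
    have hpart : ∑' k : ℤ, F k = 1 := 𝓡.η_partition ‖ξ‖
    have hSum : Summable F := by
      by_contra h
      rw [tsum_eq_zero_of_not_summable h] at hpart
      norm_num at hpart
    have hsupp : Function.support F ⊆ Set.range ((↑) : ℕ → ℤ) := by
      intro k hk
      by_contra hk'
      have hkneg : k ≤ -1 := by
        rcases lt_or_ge k 0 with h | h
        · omega
        · exact absurd ⟨k.toNat, by omega⟩ hk'
      have hkneg' : (k : ℝ) ≤ -1 := by exact_mod_cast hkneg
      apply hk
      have hz : 𝓡.η (‖ξ‖ - A * k) = 0 := by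
        apply eta_zero_of_ge 𝓡
        have h1 : A ≤ ‖ξ‖ - A * k := by nlinarith [𝓡.hA]
        rw [abs_of_pos (lt_of_lt_of_le 𝓡.hA h1)]
        exact h1
      show 𝓡.η (‖ξ‖ - A * k) ^ 2 = 0
      rw [hz]; ring
    have hnat : ∑' n : ℕ, F n = 1 := by
      rw [Nat.cast_injective.tsum_eq hsupp]; exact hpart
    have hSnat : Summable (fun n : ℕ => F n) :=
      hSum.comp_injective Nat.cast_injective
    rw [Summable.tsum_eq_zero_add hSnat] at hnat
    have hF0 : F ((0 : ℕ) : ℤ) = 𝓡.η ‖ξ‖ ^ 2 := by simp [hF]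
    have hFS : ∀ n : ℕ, F ((n + 1 : ℕ) : ℤ) = 𝓡.η (‖ξ‖ - (n + 1 : ℕ) * A) ^ 2 := by
      intro n
      rw [hF]
      congr 2
      push_cast
      ring
    rw [hF0, tsum_congr hFS] at hnat
    exact hnat

end
end

section
/- Let 𝓡 = {f₀} ∪ {f_{m,r} : m ≥ 1, r ∈ G_m} be the rotational uniform covering frame on ℝ² with parameters (A, B). Then 𝓡 satisfies the uniform covering property: for every R > 0 there exists a natural number N such that for every m ≥ 1 and every r ∈ G_m, the support of 𝓕f_{m,r} can be covered by N closed axis-parallel squares of side length 2R (and likewise for the support of 𝓕f₀). -/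
open MeasureTheory Complex Real

noncomputable section
variable {A : ℝ} {B : ℕ}

/-- The closed axis-parallel square of side length `2R` centered at `c ∈ ℝ² = ℂ`. -/
def closedSquare (c : ℂ) (R : ℝ) : Set ℂ :=
  {ξ : ℂ | |(ξ - c).re| ≤ R ∧ |(ξ - c).im| ≤ R}

lemma norm_exp_mul_I_sub_one_le (θ : ℝ) : ‖Complex.exp (θ * Complex.I) - 1‖ ≤ |θ| := by
  have h1 : Complex.exp (θ * Complex.I) - 1
      = ((Real.cos θ - 1 : ℝ) : ℂ) + ((Real.sin θ : ℝ) : ℂ) * Complex.I := by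
    rw [Complex.exp_mul_I]
    push_cast
    ring
  rw [h1, Complex.norm_def, Complex.normSq_add_mul_I]
  rw [show |θ| = Real.sqrt (θ ^ 2) by rw [Real.sqrt_sq_eq_abs]]
  apply Real.sqrt_le_sqrt
  have hc : 1 - θ ^ 2 / 2 ≤ Real.cos θ := Real.one_sub_sq_div_two_le_cos
  have hs : Real.sin θ ^ 2 + Real.cos θ ^ 2 = 1 := Real.sin_sq_add_cos_sq θ
  nlinarith [Real.cos_le_one θ]

lemma norm_rotC {n j : ℕ} (hn : n ≠ 0) : ‖rotC n j‖ = 1 := by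
  have : rotC n j = Complex.exp (((2 * Real.pi * j / n : ℝ) : ℂ) * Complex.I) := by
    unfold rotC
    congr 1
    push_cast
    field_simp
  rw [this, Complex.norm_exp_ofReal_mul_I]

lemma norm_mem_Gm {m : ℕ} (hB : 1 ≤ B) {r : ℂ} (hr : r ∈ Gm B m) : ‖r‖ = 1 := by
  rcases Finset.mem_image.mp hr with ⟨j, _, rfl⟩
  have hn : mstar m * B ≠ 0 := by
    have : 0 < mstar m := by unfold mstar; positivity
    positivity
  exact norm_rotC hn

lemma m_le_mstar (m : ℕ) : m ≤ mstar m := Nat.le_pow_clog one_lt_two m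

/-- The key support bound: the support of `𝓕 f_{m,r}` lies in a ball of radius `20 A`. -/
lemma tsupport_FT_f_subset (𝓡 : RotUCF A B) (m : ℕ) (hm : 1 ≤ m) (r : ℂ)
    (hr : r ∈ Gm B m) :
    tsupport (FT (⇑(𝓡.f m r))) ⊆ Metric.closedBall (((m : ℝ) * A : ℝ) * r) (20 * A) := by
  apply closure_minimal _ Metric.isClosed_closedBall
  intro ξ hξ
  rw [Function.mem_support] at hξ
  have hA := 𝓡.hA
  have hB := 𝓡.hB
  by_cases hξ0 : ξ = 0
  · exact absurd (hξ0 ▸ 𝓡.FT_f_zero m hm r hr) hξ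
  have hFT := 𝓡.FT_f m hm r hr ξ hξ0
  rw [hFT] at hξ
  have hprod : 𝓡.η (‖ξ‖ - m * A) * 𝓡.β m ((r⁻¹ * ξ).arg) ≠ 0 := by
    exact_mod_cast hξ
  have hη_ne : 𝓡.η (‖ξ‖ - m * A) ≠ 0 := fun h => hprod (by rw [h, zero_mul])
  have hβ_ne : 𝓡.β m ((r⁻¹ * ξ).arg) ≠ 0 := fun h => hprod (by rw [h, mul_zero])
  have hradial : |‖ξ‖ - m * A| ≤ A :=
    not_lt.mp fun hlt => hη_ne (𝓡.η_supp _ hlt)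
  have hβk : ∃ k : ℤ, |(r⁻¹ * ξ).arg - 2 * Real.pi * k| ≤ 2 * Real.pi / (mstar m * B) := by
    by_contra h
    push_neg at h
    exact hβ_ne (𝓡.β_supp m hm _ h)
  -- basic facts
  have hr1 : ‖r‖ = 1 := norm_mem_Gm hB hr
  have hr0 : r ≠ 0 := by intro h; rw [h, norm_zero] at hr1; norm_num at hr1
  set w : ℂ := r⁻¹ * ξ with hw
  have hwnorm : ‖w‖ = ‖ξ‖ := by
    rw [hw, norm_mul, norm_inv, hr1]; simp
  have hfactor : ξ - (((m : ℝ) * A : ℝ) : ℂ) * r = r * (w - (((m : ℝ) * A : ℝ) : ℂ)) := by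
    rw [hw]
    field_simp
  rw [Metric.mem_closedBall, dist_eq_norm, hfactor, norm_mul, hr1, one_mul]
  have hmA : ‖ξ‖ ≤ m * A + A := by
    have := abs_le.mp hradial
    linarith [this.2]
  have hm1 : (1 : ℝ) ≤ (m : ℝ) := by exact_mod_cast hm
  set n : ℕ := mstar m * B with hn
  have hmn : (m : ℝ) ≤ (n : ℝ) := by
    have : m ≤ n := le_trans (m_le_mstar m) (Nat.le_mul_of_pos_right _ (by omega))
    exact_mod_cast this
  have hn0 : (0 : ℝ) < (n : ℝ) := lt_of_lt_of_le (by linarith) hmn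
  have hnormw_mA :
      ‖(((‖w‖ : ℝ)) : ℂ) - (((m : ℝ) * A : ℝ) : ℂ)‖ ≤ A := by
    rw [← Complex.ofReal_sub, Complex.norm_real, Real.norm_eq_abs, hwnorm]
    exact hradial
  by_cases h3 : 3 ≤ n
  · -- the main case: narrow angular sector
    have hn3 : (3 : ℝ) ≤ (n : ℝ) := by exact_mod_cast h3
    obtain ⟨k, hk⟩ := hβk
    have hkcast : |(r⁻¹ * ξ).arg - 2 * Real.pi * k| ≤ 2 * Real.pi / n := by
      convert hk using 3
      push_cast [hn]
      ring
    have hargpi : |w.arg| ≤ Real.pi := Complex.abs_arg_le_pi w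
    have harg : |w.arg| ≤ 2 * Real.pi / n := by
      rcases eq_or_ne k 0 with rfl | hk0
      · simpa using hkcast
      · exfalso
        have hk1 : (1 : ℝ) ≤ |(k : ℝ)| := by
          have := Int.one_le_abs hk0
          calc (1 : ℝ) ≤ (|k| : ℤ) := by exact_mod_cast this
            _ = |(k : ℝ)| := by push_cast; simp
        have habs : |2 * Real.pi * k| - |w.arg| ≤ |w.arg - 2 * Real.pi * k| := by
          have := abs_sub_abs_le_abs_sub (2 * Real.pi * (k : ℝ)) w.arg
          rw [abs_sub_comm] at this
          linarith
        have h2pik : 2 * Real.pi ≤ |2 * Real.pi * (k : ℝ)| := by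
          rw [abs_mul]
          nlinarith [Real.pi_pos, abs_of_pos (show (0:ℝ) < 2 * Real.pi by positivity)]
        have hπn : Real.pi ≤ 2 * Real.pi / n := by
          have := hkcast
          have : |w.arg - 2 * Real.pi * k| ≤ 2 * Real.pi / n := by
            rw [hw]; exact hkcast
          linarith [habs, h2pik, hargpi]
        rw [le_div_iff₀ hn0] at hπn
        nlinarith [Real.pi_pos]
    -- decompose w
    have hwdec : ((‖w‖ : ℝ) : ℂ) * Complex.exp (w.arg * Complex.I) = w :=
      Complex.norm_mul_exp_arg_mul_I w
    have habsw : (‖w‖ : ℝ) = ‖w‖ := rfl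
    have hterm1 : ‖w - ((‖w‖ : ℝ) : ℂ)‖ ≤ ‖w‖ * |w.arg| := by
      have : w - ((‖w‖ : ℝ) : ℂ)
          = ((‖w‖ : ℝ) : ℂ) * (Complex.exp (w.arg * Complex.I) - 1) := by
        rw [mul_sub, mul_one, ← habsw, hwdec]
      rw [this, norm_mul, Complex.norm_real, Real.norm_eq_abs, _root_.abs_of_nonneg (norm_nonneg w)]
      exact mul_le_mul_of_nonneg_left (norm_exp_mul_I_sub_one_le w.arg) (norm_nonneg w)
    have htri : ‖w - (((m : ℝ) * A : ℝ) : ℂ)‖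
        ≤ ‖w - ((‖w‖ : ℝ) : ℂ)‖ + ‖(((‖w‖ : ℝ)) : ℂ) - (((m : ℝ) * A : ℝ) : ℂ)‖ := by
      have := norm_sub_le_norm_sub_add_norm_sub w ((‖w‖ : ℝ) : ℂ) (((m : ℝ) * A : ℝ) : ℂ)
      exact this
    have hw2n : ‖w‖ ≤ 2 * n * A := by
      rw [hwnorm]
      nlinarith
    have hnt : (n : ℝ) * |w.arg| ≤ 2 * Real.pi := by
      rw [le_div_iff₀ hn0] at harg
      nlinarith [abs_nonneg w.arg]
    have hmain : ‖w‖ * |w.arg| ≤ 16 * A := by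
      have h1 : ‖w‖ * |w.arg| ≤ 2 * n * A * |w.arg| :=
        mul_le_mul_of_nonneg_right hw2n (abs_nonneg _)
      have h2 : 2 * n * A * |w.arg| = 2 * A * ((n : ℝ) * |w.arg|) := by ring
      have h3 : 2 * A * ((n : ℝ) * |w.arg|) ≤ 2 * A * (2 * Real.pi) :=
        mul_le_mul_of_nonneg_left hnt (by positivity)
      have h4 : 2 * A * (2 * Real.pi) ≤ 16 * A := by
        nlinarith [Real.pi_le_four]
      linarith [h1, h2 ▸ h3]
    calc ‖w - (((m : ℝ) * A : ℝ) : ℂ)‖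
        ≤ ‖w - ((‖w‖ : ℝ) : ℂ)‖ + ‖(((‖w‖ : ℝ)) : ℂ) - (((m : ℝ) * A : ℝ) : ℂ)‖ := htri
      _ ≤ ‖w‖ * |w.arg| + A := add_le_add hterm1 hnormw_mA
      _ ≤ 16 * A + A := by linarith [hmain]
      _ ≤ 20 * A := by linarith
  · -- small case : n ≤ 2, so m ≤ 2
    push_neg at h3
    have hm2 : (m : ℝ) ≤ 2 := by
      have : (n : ℝ) ≤ 2 := by exact_mod_cast Nat.lt_succ_iff.mp h3
      linarith
    calc ‖w - (((m : ℝ) * A : ℝ) : ℂ)‖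
        ≤ ‖w‖ + ‖(((m : ℝ) * A : ℝ) : ℂ)‖ := norm_sub_le _ _
      _ = ‖ξ‖ + |(m : ℝ) * A| := by rw [hwnorm, Complex.norm_real, Real.norm_eq_abs]
      _ ≤ (m * A + A) + m * A := by
          have : |(m : ℝ) * A| = m * A := _root_.abs_of_nonneg (by positivity)
          linarith [hmA, this.le, this.ge]
      _ ≤ 20 * A := by
          have h2A : (m : ℝ) * A ≤ 2 * A := mul_le_mul_of_nonneg_right hm2 hA.le
          linarith

/-- Covering a closed ball of radius `D` by squares of side `2R`. -/
lemma cover_ball_by_squares (c : ℂ) (D R : ℝ) (hR : 0 < R) :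
    ∃ c' : Fin ((⌈D / R⌉₊ + 1) ^ 2) → ℂ,
      Metric.closedBall c D ⊆ ⋃ i, closedSquare (c' i) R := by
  set n : ℕ := ⌈D / R⌉₊ + 1 with hn
  have key : ∀ x : ℝ, |x| ≤ D → ∃ i : ℕ, i < n ∧ |x - (-D + R + 2 * R * i)| ≤ R := by
    intro x hx
    have hxD : 0 ≤ x + D := by cases abs_le.mp hx; linarith
    refine ⟨⌊(x + D) / (2 * R)⌋₊, ?_, ?_⟩
    · have h1 : ⌊(x + D) / (2 * R)⌋₊ ≤ ⌊D / R⌋₊ := by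
        apply Nat.floor_le_floor
        rw [div_le_div_iff₀ (by positivity) (by positivity)]
        have : x ≤ D := (abs_le.mp hx).2
        nlinarith
      have h2 : ⌊D / R⌋₊ ≤ ⌈D / R⌉₊ := Nat.floor_le_ceil _
      omega
    · set i := ⌊(x + D) / (2 * R)⌋₊ with hi
      have hlow : (2 * R) * i ≤ x + D := by
        have := Nat.floor_le (by positivity : (0:ℝ) ≤ (x + D) / (2 * R))
        rw [← hi] at this
        calc (2 * R) * i ≤ (2 * R) * ((x + D) / (2 * R)) :=
              mul_le_mul_of_nonneg_left this (by positivity)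
          _ = x + D := by field_simp
      have hhigh : x + D < (2 * R) * (i + 1) := by
        have := Nat.lt_floor_add_one ((x + D) / (2 * R))
        rw [← hi] at this
        calc x + D = (2 * R) * ((x + D) / (2 * R)) := by field_simp
          _ < (2 * R) * (i + 1) := by
              apply mul_lt_mul_of_pos_left _ (by positivity)
              exact_mod_cast this
      rw [abs_le]
      constructor <;> nlinarith
  have hD : D < 0 ∨ 0 ≤ D := lt_or_ge D 0
  rcases hD with hD | hD
  · -- empty ball
    refine ⟨fun _ => c, ?_⟩
    intro ξ hξ
    exact absurd (Metric.mem_closedBall.mp hξ) (not_le.mpr (lt_of_lt_of_le hD dist_nonneg))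
  · refine ⟨fun i => c + (((-D + R + 2 * R * ((i.val / n : ℕ) : ℝ) : ℝ) : ℂ)
      + ((-D + R + 2 * R * ((i.val % n : ℕ) : ℝ) : ℝ) : ℂ) * Complex.I), ?_⟩
    intro ξ hξ
    rw [Metric.mem_closedBall] at hξ
    have hre : |(ξ - c).re| ≤ D :=
      le_trans (Complex.abs_re_le_norm _) (by rwa [Complex.dist_eq] at hξ)
    have him : |(ξ - c).im| ≤ D :=
      le_trans (Complex.abs_im_le_norm _) (by rwa [Complex.dist_eq] at hξ)
    obtain ⟨i, hi, hix⟩ := key _ hre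
    obtain ⟨j, hj, hjx⟩ := key _ him
    have hidx : n * i + j < n ^ 2 := by
      have h1 : n * i + j < n * i + n := by omega
      have h2 : n * i + n = n * (i + 1) := by ring
      have h3 : n * (i + 1) ≤ n * n := Nat.mul_le_mul_left _ (by omega)
      rw [pow_two]
      omega
    refine Set.mem_iUnion.mpr ⟨⟨n * i + j, hidx⟩, ?_⟩
    have hdiv : (n * i + j) / n = i := by
      rw [Nat.mul_add_div (by omega), Nat.div_eq_of_lt hj, add_zero]
    have hmod : (n * i + j) % n = j := by
      rw [Nat.mul_add_mod, Nat.mod_eq_of_lt hj]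
    constructor
    · have : (ξ - (c + (((-D + R + 2 * R * (((n * i + j) / n : ℕ) : ℝ) : ℝ) : ℂ)
          + ((-D + R + 2 * R * (((n * i + j) % n : ℕ) : ℝ) : ℝ) : ℂ) * Complex.I))).re
          = (ξ - c).re - (-D + R + 2 * R * i) := by
        rw [hdiv, hmod]
        simp [Complex.sub_re, Complex.add_re, Complex.mul_re]
        ring
      rw [this]
      exact hix
    · have : (ξ - (c + (((-D + R + 2 * R * (((n * i + j) / n : ℕ) : ℝ) : ℝ) : ℂ)
          + ((-D + R + 2 * R * (((n * i + j) % n : ℕ) : ℝ) : ℝ) : ℂ) * Complex.I))).im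
          = (ξ - c).im - (-D + R + 2 * R * j) := by
        rw [hdiv, hmod]
        simp [Complex.sub_im, Complex.add_im, Complex.mul_im]
        ring
      rw [this]
      exact hjx

/-- uniform covering property: for every `R > 0` there is an `N ∈ ℕ` such
that for every `m ≥ 1` and every `r ∈ G_m`, the support of `𝓕f_{m,r}` can be covered by `N`
closed axis-parallel squares of side length `2R`, and likewise for the support of `𝓕f₀`. -/
theorem uniform_covering (𝓡 : RotUCF A B) (R : ℝ) (hR : 0 < R) :
    ∃ N : ℕ,
      (∀ m, 1 ≤ m → ∀ r ∈ Gm B m, ∃ c : Fin N → ℂ,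
        tsupport (FT (⇑(𝓡.f m r))) ⊆ ⋃ i : Fin N, closedSquare (c i) R)
      ∧ ∃ c : Fin N → ℂ, tsupport (FT (⇑𝓡.f0)) ⊆ ⋃ i : Fin N, closedSquare (c i) R := by
  have hA := 𝓡.hA
  refine ⟨(⌈(20 * A) / R⌉₊ + 1) ^ 2, ?_, ?_⟩
  · intro m hm r hr
    obtain ⟨c', hc'⟩ := cover_ball_by_squares ((((m : ℝ) * A : ℝ) : ℂ) * r) (20 * A) R hR
    exact ⟨c', (tsupport_FT_f_subset 𝓡 m hm r hr).trans hc'⟩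
  · obtain ⟨c', hc'⟩ := cover_ball_by_squares 0 (20 * A) R hR
    refine ⟨c', Set.Subset.trans ?_ hc'⟩
    apply closure_minimal _ Metric.isClosed_closedBall
    intro ξ hξ
    rw [Function.mem_support, 𝓡.FT_f0] at hξ
    have hη : 𝓡.η ‖ξ‖ ≠ 0 := by exact_mod_cast hξ
    have : |‖ξ‖| ≤ A := not_lt.mp fun hlt => hη (𝓡.η_supp _ hlt)
    rw [Metric.mem_closedBall, dist_zero_right]
    calc ‖ξ‖ = |‖ξ‖| := (_root_.abs_of_nonneg (norm_nonneg ξ)).symm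
      _ ≤ A := this
      _ ≤ 20 * A := by linarith

end
end

section
/- (G-invariance of the rotational Fourier scattering transform.) Let 𝓡 be the rotational uniform covering frame on ℝ² with parameters (A, B). For every f ∈ L²(ℝ²), every r ∈ G, every k ≥ 1, every q ∈ 𝒢^k, and every x ∈ ℝ²: ∑_{s∈G} |(f_r ⋆ f₀)(sx)|² = ∑_{s∈G} |(f ⋆ f₀)(sx)|² and ∑_{s∈G} |(U[sq]f_r ⋆ f₀)(sx)|² = ∑_{s∈G} |(U[sq]f ⋆ f₀)(sx)|². In particular, every component of the rotational Fourier scattering transform of f_r equals the corresponding component for f. -/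
open MeasureTheory Complex Real

section ScatteringAux

open FourierTransform MeasureTheory Complex Real

variable {A : ℝ} {B : ℕ}

lemma rotC_eq (n j : ℕ) : rotC n j = Complex.exp (((2 * Real.pi * j / n : ℝ) : ℂ) * Complex.I) := by
  unfold rotC; congr 1; push_cast; ring

lemma rotC_norm (n j : ℕ) : ‖rotC n j‖ = 1 := by
  rw [rotC_eq, Complex.norm_exp]
  simp

lemma Gm_norm {m : ℕ} {r : ℂ} (h : r ∈ Gm B m) : ‖r‖ = 1 := by
  obtain ⟨j, -, rfl⟩ := Finset.mem_image.1 h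
  exact rotC_norm _ _

lemma Gm_ne_zero {m : ℕ} {r : ℂ} (h : r ∈ Gm B m) : r ≠ 0 := by
  intro h0; have := Gm_norm h; rw [h0] at this; simp at this

lemma rotC_add (n a b : ℕ) : rotC n (a + b) = rotC n a * rotC n b := by
  unfold rotC; rw [← Complex.exp_add]; congr 1; push_cast; ring

lemma rotC_nat_mul_self (n q : ℕ) (hn : n ≠ 0) : rotC n (n * q) = 1 := by
  have hn' : (n : ℂ) ≠ 0 := Nat.cast_ne_zero.2 hn
  unfold rotC
  have : (2 * Real.pi * Complex.I * (↑(n * q)) / n) = (q : ℕ) * (2 * Real.pi * Complex.I) := by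
    push_cast; field_simp
  rw [this, Complex.exp_nat_mul_two_pi_mul_I]

lemma rotC_mod (n j : ℕ) (hn : n ≠ 0) : rotC n (j % n) = rotC n j := by
  conv_rhs => rw [← Nat.mod_add_div j n]
  rw [rotC_add, rotC_nat_mul_self n _ hn, mul_one]

lemma mstar_ne_zero (m : ℕ) : mstar m ≠ 0 := by
  unfold mstar; positivity

lemma rotC_mem_Gm {m : ℕ} (hB : 1 ≤ B) (j : ℕ) : rotC (mstar m * B) j ∈ Gm B m := by
  have hn : mstar m * B ≠ 0 := Nat.mul_ne_zero (mstar_ne_zero m) (by omega)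
  rw [← rotC_mod _ j hn]
  exact Finset.mem_image.2 ⟨j % (mstar m * B), Finset.mem_range.2 (Nat.mod_lt _ (Nat.pos_of_ne_zero hn)), rfl⟩

lemma mstar_one : mstar 1 = 1 := by simp [mstar, Nat.clog_one_right]

lemma rotC_scale (k n j : ℕ) (hk : k ≠ 0) : rotC (k * n) (j * k) = rotC n j := by
  have hk' : (k : ℂ) ≠ 0 := Nat.cast_ne_zero.2 hk
  unfold rotC
  congr 1
  push_cast
  rw [show (2 : ℂ) * Real.pi * Complex.I * ((j : ℂ) * k) = k * (2 * Real.pi * Complex.I * j) by ring,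
    show ((k : ℂ) * n) = k * n from rfl, mul_div_mul_left _ _ hk']

lemma mem_G1_iff {r : ℂ} (hB : 1 ≤ B) {m : ℕ} (hr : r ∈ Gm B 1) :
    ∃ j, r = rotC (mstar m * B) (j * mstar m) := by
  obtain ⟨j, -, rfl⟩ := Finset.mem_image.1 hr
  refine ⟨j, ?_⟩
  rw [rotC_scale _ _ _ (mstar_ne_zero m), mstar_one, one_mul]

lemma mul_mem_Gm {m : ℕ} (hB : 1 ≤ B) {r s : ℂ} (hr : r ∈ Gm B 1) (hs : s ∈ Gm B m) :
    r * s ∈ Gm B m := by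
  obtain ⟨j, rfl⟩ := mem_G1_iff hB (m := m) hr
  obtain ⟨i, -, rfl⟩ := Finset.mem_image.1 hs
  rw [← rotC_add]
  exact rotC_mem_Gm hB _

lemma inv_mem_G1 (hB : 1 ≤ B) {r : ℂ} (hr : r ∈ Gm B 1) : r⁻¹ ∈ Gm B 1 := by
  obtain ⟨j, hj, rfl⟩ := Finset.mem_image.1 hr
  rw [mstar_one, one_mul] at hj ⊢
  replace hj := Finset.mem_range.1 hj
  have hB0 : B ≠ 0 := by omega
  have h1 : rotC B j * rotC B (B - j) = 1 := by
    rw [← rotC_add, show j + (B - j) = B by omega, ← rotC_nat_mul_self B 1 hB0, Nat.mul_one]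
  have h2 : rotC B (B - j) = (rotC B j)⁻¹ := eq_inv_of_mul_eq_one_right h1
  rw [← h2]
  have := rotC_mem_Gm (m := 1) hB (B - j)
  rwa [mstar_one, one_mul] at this

lemma sum_Gm_reindex (hB : 1 ≤ B) {r : ℂ} (hr : r ∈ Gm B 1) (F : ℂ → ℝ) :
    ∑ s ∈ Gm B 1, F (r * s) = ∑ s ∈ Gm B 1, F s := by
  have hr0 : r ≠ 0 := Gm_ne_zero hr
  refine Finset.sum_nbij' (i := fun s => r * s) (j := fun s => r⁻¹ * s) ?_ ?_ ?_ ?_ ?_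
  · intro a ha
    have h1 : mstar 1 * B = mstar 1 * B := rfl
    exact mul_mem_Gm hB hr ha
  · intro a ha; exact mul_mem_Gm hB (inv_mem_G1 hB hr) ha
  · intro a ha; field_simp
  · intro a ha; field_simp
  · intro a ha; rfl

end ScatteringAux

section ScatteringAux2

open FourierTransform MeasureTheory Complex Real

variable {A : ℝ} {B : ℕ}

/-- Rotation by a unit complex number as a linear isometry equivalence. -/
noncomputable def rotE (r : ℂ) (hr : ‖r‖ = 1) : ℂ ≃ₗᵢ[ℝ] ℂ :=
  rotation ⟨r, by simpa [Submonoid.unitSphere] using hr⟩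

lemma rotE_apply (r : ℂ) (hr : ‖r‖ = 1) (z : ℂ) : rotE r hr z = r * z := rfl

lemma integral_rot {r : ℂ} (hr : ‖r‖ = 1) (g : ℂ → ℂ) :
    ∫ y : ℂ, g (r * y) = ∫ y : ℂ, g y := by
  have h := (rotE r hr).measurePreserving.integral_comp
    (rotE r hr).toHomeomorph.measurableEmbedding g
  simpa [rotE_apply] using h

lemma integrable_rot {r : ℂ} (hr : ‖r‖ = 1) {g : ℂ → ℂ} (hg : Integrable g) :
    Integrable (fun x => g (r * x)) := by
  have h := ((rotE r hr).measurePreserving.integrable_comp_emb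
    (rotE r hr).toHomeomorph.measurableEmbedding (g := g)).2 hg
  exact h

lemma conv_rotF {r : ℂ} (hr : ‖r‖ = 1) (f v : ℂ → ℂ) (x : ℂ) :
    conv (rotF r f) v x = conv f (rotF r⁻¹ v) (r * x) := by
  have hr0 : r ≠ 0 := fun h => by simp [h] at hr
  unfold conv rotF
  rw [← integral_rot hr (fun y => f (r * x - y) * v (r⁻¹ * y))]
  congr 1; ext y
  rw [inv_mul_cancel_left₀ hr0, mul_sub]

lemma dotR_eq_inner (x ξ : ℂ) : dotR x ξ = (inner ℝ x ξ : ℝ) := by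
  rw [Complex.inner]
  unfold dotR
  simp [Complex.mul_re, Complex.conj_re, Complex.conj_im]
  ring

lemma FT_eq (f : ℂ → ℂ) (ξ : ℂ) : FT f ξ = 𝓕 f ξ := by
  rw [Real.fourier_eq']
  unfold FT
  congr 1; ext x
  rw [smul_eq_mul]
  congr 1
  rw [← dotR_eq_inner]
  push_cast
  ring

lemma FT_rotF {c : ℂ} (hc : ‖c‖ = 1) (f : ℂ → ℂ) (ξ : ℂ) :
    FT (rotF c f) ξ = FT f (c * ξ) := by
  rw [FT_eq, FT_eq]
  have h1 : rotF c f = f ∘ (rotE c hc) := rfl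
  rw [h1, Real.fourier_comp_linearIsometry]
  rfl

lemma eq_of_FT_eq {u v : ℂ → ℂ} (hu : Continuous u) (hui : Integrable u)
    (huF : Integrable (𝓕 u)) (hv : Continuous v) (hvi : Integrable v)
    (hvF : Integrable (𝓕 v)) (h : ∀ ξ, FT u ξ = FT v ξ) : u = v := by
  have h' : 𝓕 u = 𝓕 v := by
    funext ξ
    rw [← FT_eq, ← FT_eq]
    exact h ξ
  calc u = 𝓕⁻ (𝓕 u) := (hu.fourierInv_fourier_eq hui huF).symm
    _ = 𝓕⁻ (𝓕 v) := by rw [h']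
    _ = v := hv.fourierInv_fourier_eq hvi hvF

lemma schwartz_FT_integrable (φ : SchwartzMap ℂ ℂ) : Integrable (𝓕 ⇑φ) := by
  rw [← SchwartzMap.fourier_coe]
  exact (𝓕 φ).integrable

lemma rotF_schwartz_eq (φ ψ : SchwartzMap ℂ ℂ) {c : ℂ} (hc : ‖c‖ = 1)
    (h : ∀ ξ, FT ⇑φ (c * ξ) = FT ⇑ψ ξ) : rotF c ⇑φ = ⇑ψ := by
  refine eq_of_FT_eq ?_ ?_ ?_ ψ.continuous ψ.integrable (schwartz_FT_integrable ψ) ?_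
  · exact φ.continuous.comp (continuous_const.mul continuous_id)
  · exact integrable_rot hc φ.integrable
  · have h2 : 𝓕 (rotF c ⇑φ) = fun ξ => 𝓕 ⇑φ (c * ξ) := by
      funext ξ
      rw [← FT_eq, FT_rotF hc, FT_eq]
    rw [h2]
    exact integrable_rot hc (schwartz_FT_integrable φ)
  · intro ξ
    rw [FT_rotF hc]
    exact h ξ

lemma rot_f0 (𝓡 : RotUCF A B) {c : ℂ} (hc : ‖c‖ = 1) : rotF c ⇑𝓡.f0 = ⇑𝓡.f0 := by
  refine rotF_schwartz_eq _ _ hc fun ξ => ?_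
  rw [𝓡.FT_f0, 𝓡.FT_f0, norm_mul, hc, one_mul]

lemma rot_frame (𝓡 : RotUCF A B) {m : ℕ} (hm : 1 ≤ m) {r s : ℂ}
    (hr : r ∈ Gm B 1) (hs : s ∈ Gm B m) :
    rotF r⁻¹ ⇑(𝓡.f m s) = ⇑(𝓡.f m (r * s)) := by
  have hrn : ‖r‖ = 1 := Gm_norm hr
  have hr0 : r ≠ 0 := Gm_ne_zero hr
  have hrin : ‖r⁻¹‖ = 1 := by rw [norm_inv, hrn, inv_one]
  have hrs : r * s ∈ Gm B m := mul_mem_Gm 𝓡.hB hr hs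
  refine rotF_schwartz_eq _ _ hrin fun ξ => ?_
  by_cases hξ : ξ = 0
  · subst hξ
    rw [mul_zero, 𝓡.FT_f_zero m hm s hs, 𝓡.FT_f_zero m hm _ hrs]
  · have hξ' : r⁻¹ * ξ ≠ 0 := mul_ne_zero (inv_ne_zero hr0) hξ
    rw [𝓡.FT_f m hm s hs _ hξ', 𝓡.FT_f m hm _ hrs ξ hξ]
    rw [norm_mul, hrin, one_mul, mul_inv_rev, mul_assoc]

end ScatteringAux2

section ScatteringAux3

open FourierTransform MeasureTheory Complex Real

variable {A : ℝ} {B : ℕ}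

lemma U_rotF (𝓡 : RotUCF A B) {r : ℂ} (hr : r ∈ Gm B 1) :
    ∀ (p : List (ℕ × ℂ)), ValidList B p → ∀ f : ℂ → ℂ,
      U 𝓡 p (rotF r f) = rotF r (U 𝓡 (actL r p) f) := by
  have hrn : ‖r‖ = 1 := Gm_norm hr
  intro p
  induction p with
  | nil => intro _ f; rfl
  | cons a p ih =>
    intro hval f
    have ha : validIdx B a := hval a List.mem_cons_self
    have hp : ValidList B p := fun b hb => hval b (List.mem_cons_of_mem a hb)
    have h1 : (fun x => ((‖conv (rotF r f) (⇑(𝓡.f a.1 a.2)) x‖ : ℝ) : ℂ))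
        = rotF r (fun x => ((‖conv f (⇑(𝓡.f a.1 (r * a.2))) x‖ : ℝ) : ℂ)) := by
      funext x
      show ((‖conv (rotF r f) (⇑(𝓡.f a.1 a.2)) x‖ : ℝ) : ℂ)
          = ((‖conv f (⇑(𝓡.f a.1 (r * a.2))) (r * x)‖ : ℝ) : ℂ)
      rw [conv_rotF hrn, rot_frame 𝓡 ha.1 hr ha.2]
    show U 𝓡 p (fun x => ((‖conv (rotF r f) (⇑(𝓡.f a.1 a.2)) x‖ : ℝ) : ℂ))
        = rotF r (U 𝓡 (actL r (a :: p)) f)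
    rw [h1, ih hp]
    rfl

lemma actL_valid {s : ℂ} (hs : s ∈ Gm B 1) (hB : 1 ≤ B) {q : List (ℕ × ℂ)}
    (hq : ValidList B q) : ValidList B (actL s q) := by
  intro a ha
  obtain ⟨b, hb, rfl⟩ := List.mem_map.1 ha
  exact ⟨(hq b hb).1, mul_mem_Gm hB hs (hq b hb).2⟩

lemma actL_actL (r s : ℂ) (q : List (ℕ × ℂ)) : actL r (actL s q) = actL (r * s) q := by
  unfold actL
  rw [List.map_map]
  congr 1
  funext a
  simp [Function.comp, mul_assoc]

theorem scattering_G_invariance' (𝓡 : RotUCF A B) (f : ℂ → ℂ)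
    (r : ℂ) (hr : r ∈ Gm B 1)
    (q : List (ℕ × ℂ)) (hq : ValidList B q) (x : ℂ) :
    (∑ s ∈ Gm B 1, ‖conv (rotF r f) (⇑𝓡.f0) (s * x)‖ ^ 2
        = ∑ s ∈ Gm B 1, ‖conv f (⇑𝓡.f0) (s * x)‖ ^ 2)
    ∧ ∑ s ∈ Gm B 1, ‖conv (U 𝓡 (actL s q) (rotF r f)) (⇑𝓡.f0) (s * x)‖ ^ 2
        = ∑ s ∈ Gm B 1, ‖conv (U 𝓡 (actL s q) f) (⇑𝓡.f0) (s * x)‖ ^ 2 := by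
  have hB : 1 ≤ B := 𝓡.hB
  have hrn : ‖r‖ = 1 := Gm_norm hr
  have hrin : ‖r⁻¹‖ = 1 := by rw [norm_inv, hrn, inv_one]
  constructor
  · have e1 : ∀ s : ℂ, conv (rotF r f) (⇑𝓡.f0) (s * x) = conv f (⇑𝓡.f0) (r * s * x) := by
      intro s
      rw [conv_rotF hrn, rot_f0 𝓡 hrin, mul_assoc]
    calc ∑ s ∈ Gm B 1, ‖conv (rotF r f) (⇑𝓡.f0) (s * x)‖ ^ 2
        = ∑ s ∈ Gm B 1, ‖conv f (⇑𝓡.f0) (r * s * x)‖ ^ 2 := by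
          refine Finset.sum_congr rfl fun s _ => ?_
          rw [e1]
      _ = ∑ s ∈ Gm B 1, ‖conv f (⇑𝓡.f0) (s * x)‖ ^ 2 := by
          exact sum_Gm_reindex hB hr (fun t => ‖conv f (⇑𝓡.f0) (t * x)‖ ^ 2)
  · have e2 : ∀ s ∈ Gm B 1, ‖conv (U 𝓡 (actL s q) (rotF r f)) (⇑𝓡.f0) (s * x)‖ ^ 2
        = ‖conv (U 𝓡 (actL (r * s) q) f) (⇑𝓡.f0) (r * s * x)‖ ^ 2 := by
      intro s hs
      have hU : U 𝓡 (actL s q) (rotF r f) = rotF r (U 𝓡 (actL (r * s) q) f) := by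
        rw [U_rotF 𝓡 hr (actL s q) (actL_valid hs hB hq) f, actL_actL]
      rw [hU, conv_rotF hrn, rot_f0 𝓡 hrin, mul_assoc]
    calc ∑ s ∈ Gm B 1, ‖conv (U 𝓡 (actL s q) (rotF r f)) (⇑𝓡.f0) (s * x)‖ ^ 2
        = ∑ s ∈ Gm B 1, ‖conv (U 𝓡 (actL (r * s) q) f) (⇑𝓡.f0) (r * s * x)‖ ^ 2 :=
          Finset.sum_congr rfl e2
      _ = ∑ s ∈ Gm B 1, ‖conv (U 𝓡 (actL s q) f) (⇑𝓡.f0) (s * x)‖ ^ 2 :=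
          sum_Gm_reindex hB hr (fun t => ‖conv (U 𝓡 (actL t q) f) (⇑𝓡.f0) (t * x)‖ ^ 2)

end ScatteringAux3

noncomputable section
variable {A : ℝ} {B : ℕ}

/-- G-invariance of the rotational Fourier scattering transform:
for every `f ∈ L²(ℝ²)`, every `r ∈ G`, every `k ≥ 1`, every `q ∈ 𝒢^k`, and every `x ∈ ℝ²`,
`∑_{s ∈ G} |(f_r ⋆ f₀)(sx)|² = ∑_{s ∈ G} |(f ⋆ f₀)(sx)|²` and
`∑_{s ∈ G} |(U[sq]f_r ⋆ f₀)(sx)|² = ∑_{s ∈ G} |(U[sq]f ⋆ f₀)(sx)|²`. -/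
theorem scattering_G_invariance (𝓡 : RotUCF A B) (f : ℂ → ℂ) (hf : MemLp f 2 volume)
    (r : ℂ) (hr : r ∈ Gm B 1) (k : ℕ) (hk : 1 ≤ k)
    (q : List (ℕ × ℂ)) (hqk : q.length = k) (hq : ValidList B q) (x : ℂ) :
    (∑ s ∈ Gm B 1, ‖conv (rotF r f) (⇑𝓡.f0) (s * x)‖ ^ 2
        = ∑ s ∈ Gm B 1, ‖conv f (⇑𝓡.f0) (s * x)‖ ^ 2)
    ∧ ∑ s ∈ Gm B 1, ‖conv (U 𝓡 (actL s q) (rotF r f)) (⇑𝓡.f0) (s * x)‖ ^ 2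
        = ∑ s ∈ Gm B 1, ‖conv (U 𝓡 (actL s q) f) (⇑𝓡.f0) (s * x)‖ ^ 2 := by
  exact scattering_G_invariance' 𝓡 f r hr q hq x

end
end
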